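/- Let N ≥ 1, l ≥ 1, and let g be an (Nl)×(Nl) complex matrix which is block tridiagonal with l×l blocks: writing each index α ∈ {1,…,Nl} as α = p(α)l + q(α) with p(α) ∈ {0,…,N−1}, q(α) ∈ {1,…,l}, assume g(α,α') = 0 whenever |p(α)−p(α')| ≥ 2. Fix α, α' ∈ {1,…,Nl} and let P*_{α'→α} be the set of sequences γ = (r₁,…,r_s), 1 ≤ s ≤ Nl, of elements of {1,…,Nl} with r₁ = α', r_s = α, interior entries r₂,…,r_{s−1} pairwise distinct and distinct from r₁ and r_s, and g(r_i, r_{i+1}) ≠ 0 for all 1 ≤ i ≤ s−1. For such γ let b(γ) = #{1 ≤ i ≤ s−1 : |p(r_i) − p(r_{i+1})| = 1}. Then: (a) every γ ∈ P*_{α'→α} satisfies |p(α) − p(α')| ≤ b(γ) ≤ Nl; and (b) the cardinality of P*_{α'→α} is at most (3l)^{Nl}. -/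

import Mathlib

noncomputable section

open Matrix
open scoped Classical

/-- Encoding of paths `γ = (r₁, …, r_s)` with `1 ≤ s ≤ M` and entries in
`Fin M`: a pair of `k : Fin M` (so that `s = k + 1`) and a function
`r : Fin (k+1) → Fin M` listing the entries. -/
abbrev PathIdx (M : ℕ) := Σ k : Fin M, Fin (k.1 + 1) → Fin M

/-- The site coordinate `p(α) = α / l` of an index `α`, as an integer. -/
def siteOf (l : ℕ) {M : ℕ} (a : Fin M) : ℤ := ((a.1 / l : ℕ) : ℤ)

/-- `γ ∈ P*_{α'→α}`: the first entry is `α'`, the last is `α`, the interior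
entries are pairwise distinct and distinct from both endpoints, and all steps of
the path use nonzero entries of `g`. -/
def IsStarPath {M : ℕ} (g : Matrix (Fin M) (Fin M) ℂ) (α α' : Fin M)
    (γ : PathIdx M) : Prop :=
  γ.2 ⟨0, Nat.succ_pos _⟩ = α' ∧ γ.2 (Fin.last γ.1.1) = α ∧
    (∀ i j : Fin (γ.1.1 + 1), i ≠ j → i ≠ ⟨0, Nat.succ_pos _⟩ →
      i ≠ Fin.last γ.1.1 → γ.2 i ≠ γ.2 j) ∧
    ∀ i : Fin γ.1.1, g (γ.2 i.castSucc) (γ.2 i.succ) ≠ 0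

/-- `b(γ)`: the number of steps of `γ` between neighbouring blocks, i.e. the
number of `i` with `|p(r_i) - p(r_{i+1})| = 1`. -/
def bval (l : ℕ) {M : ℕ} (γ : PathIdx M) : ℕ :=
  (Finset.univ.filter fun i : Fin γ.1.1 =>
    |siteOf l (γ.2 i.castSucc) - siteOf l (γ.2 i.succ)| = 1).card

open Finset

/-!
Since `g` is block tridiagonal, each step of a path in `P*_{α'→α}` moves the site coordinate
`p` by at most one, so telescoping `p(α) - p(α')` along the path bounds it by the number `b(γ)`
of steps that change the site. For the count, such a step `r_i → r_{i+1}` is determined by the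
offset `r_{i+1} - (p(r_i) - 1) l ∈ [0, 3l)`; as `r_1 = α'` is fixed, a path is determined by its
length and its sequence of offsets, which gives at most `∑_{k < Nl} (3l)^k ≤ (3l)^{Nl}` paths.
-/

theorem Fin.sum_univ_succ_sub_castSucc {G : Type*} [AddCommGroup G] {k : ℕ}
    (f : Fin (k + 1) → G) :
    ∑ i : Fin k, (f i.succ - f i.castSucc) = f (Fin.last k) - f 0 := by
  induction k with
  | zero => simp
  | succ k ih =>
    rw [Fin.sum_univ_castSucc]
    have h := ih (fun i => f i.castSucc)
    simp only [Fin.succ_castSucc] at h ⊢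
    rw [h, Fin.succ_last, Fin.castSucc_zero]
    abel

theorem abs_sub_le_card_of_abs_step_le_one {k : ℕ} (f : Fin (k + 1) → ℤ)
    (hf : ∀ i : Fin k, |f i.castSucc - f i.succ| ≤ 1) :
    |f (Fin.last k) - f 0| ≤ #{i : Fin k | |f i.castSucc - f i.succ| = 1} := by
  have hstep : ∀ i : Fin k,
      |f i.castSucc - f i.succ| = if |f i.castSucc - f i.succ| = 1 then 1 else 0 := by
    intro i
    split_ifs with h
    · exact h
    · have := abs_nonneg (f i.castSucc - f i.succ)
      have := hf i
      omega
  calc |f (Fin.last k) - f 0| = |∑ i : Fin k, (f i.succ - f i.castSucc)| := by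
        rw [Fin.sum_univ_succ_sub_castSucc]
    _ ≤ ∑ i : Fin k, |f i.succ - f i.castSucc| := abs_sum_le_sum_abs _ _
    _ = ∑ i : Fin k, |f i.castSucc - f i.succ| := by simp_rw [abs_sub_comm]
    _ = _ := by rw [sum_congr rfl fun i _ => hstep i, sum_boole]

theorem Fintype.card_sigma_fin_pow_le {n c : ℕ} (hc : 2 ≤ c) :
    Fintype.card (Σ k : Fin n, Fin k.1 → Fin c) ≤ c ^ n := by
  simp only [Fintype.card_sigma, Fintype.card_fun, Fintype.card_fin]
  rw [Fin.sum_univ_eq_sum_range (c ^ ·)]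
  exact (Nat.geomSum_lt hc fun k hk => mem_range.mp hk).le

def IsBlockPath (l : ℕ) {M k : ℕ} (r : Fin (k + 1) → Fin M) : Prop :=
  ∀ i : Fin k, |siteOf l (r i.castSucc) - siteOf l (r i.succ)| ≤ 1

theorem IsStarPath.isBlockPath {l M : ℕ} {g : Matrix (Fin M) (Fin M) ℂ}
    (htri : ∀ a b : Fin M, 2 ≤ |siteOf l a - siteOf l b| → g a b = 0)
    {α α' : Fin M} {γ : PathIdx M} (hγ : IsStarPath g α α' γ) : IsBlockPath l γ.2 := by
  intro i
  by_contra h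
  exact hγ.2.2.2 i (htri _ _ (by linarith [not_le.mp h]))

theorem IsBlockPath.abs_siteOf_sub_le_bval {l M : ℕ} {γ : PathIdx M}
    (hγ : IsBlockPath l γ.2) :
    |siteOf l (γ.2 (Fin.last γ.1.1)) - siteOf l (γ.2 0)| ≤ (bval l γ : ℤ) :=
  abs_sub_le_card_of_abs_step_le_one (fun i => siteOf l (γ.2 i)) hγ

theorem bval_lt {l M : ℕ} (γ : PathIdx M) : bval l γ < M :=
  (card_filter_le _ _).trans_lt (by simp)

def blockOffset (l : ℕ) {M : ℕ} (a b : Fin M) : ℕ := b.1 + l - a.1 / l * l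

theorem div_mul_le_add_of_abs_siteOf_sub_le_one {l M : ℕ} {a b : Fin M}
    (h : |siteOf l a - siteOf l b| ≤ 1) : a.1 / l * l ≤ b.1 + l := by
  rw [siteOf, siteOf, abs_le] at h
  calc a.1 / l * l ≤ (b.1 / l + 1) * l := Nat.mul_le_mul_right _ (by omega)
    _ = b.1 / l * l + l := by ring
    _ ≤ b.1 + l := Nat.add_le_add_right (Nat.div_mul_le_self _ _) _

theorem blockOffset_lt {l M : ℕ} (hl : 0 < l) {a b : Fin M}
    (h : |siteOf l a - siteOf l b| ≤ 1) : blockOffset l a b < 3 * l := by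
  rw [siteOf, siteOf, abs_le] at h
  have hb : b.1 / l * l + b.1 % l = b.1 := Nat.div_add_mod' b.1 l
  have hmod : b.1 % l < l := Nat.mod_lt _ hl
  have hba : b.1 / l * l ≤ (a.1 / l + 1) * l := Nat.mul_le_mul_right _ (by omega)
  rw [add_mul, one_mul] at hba
  unfold blockOffset
  omega

theorem IsBlockPath.eq_of_blockOffset_eq {l M k : ℕ} {r r' : Fin (k + 1) → Fin M}
    (hr : IsBlockPath l r) (hr' : IsBlockPath l r') (h0 : r 0 = r' 0)
    (h : ∀ i : Fin k, blockOffset l (r i.castSucc) (r i.succ) =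
      blockOffset l (r' i.castSucc) (r' i.succ)) :
    r = r' := by
  funext j
  induction j using Fin.induction with
  | zero => exact h0
  | succ i ih =>
    have hi := h i
    have hb := div_mul_le_add_of_abs_siteOf_sub_le_one (hr i)
    have hb' := div_mul_le_add_of_abs_siteOf_sub_le_one (hr' i)
    rw [ih] at hi hb
    unfold blockOffset at hi
    exact Fin.ext (by omega)

/-- `Fin.ofNat` reduces modulo `3 * l`, which changes nothing on block paths (`blockOffset_lt`). -/
def blockCode (l : ℕ) [NeZero l] {M : ℕ} (γ : PathIdx M) :
    Σ k : Fin M, Fin k.1 → Fin (3 * l) :=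
  ⟨γ.1, fun i => Fin.ofNat _ (blockOffset l (γ.2 i.castSucc) (γ.2 i.succ))⟩

theorem blockCode_injOn (l : ℕ) [NeZero l] {M : ℕ} (a : Fin M) :
    Set.InjOn (blockCode l) {γ : PathIdx M | γ.2 0 = a ∧ IsBlockPath l γ.2} := by
  rintro ⟨k, r⟩ ⟨h0, hr⟩ ⟨k', r'⟩ ⟨h0', hr'⟩ hcode
  obtain ⟨rfl, hcodes⟩ := Sigma.mk.inj_iff.mp hcode
  have hoffsets : ∀ i : Fin k.1, blockOffset l (r i.castSucc) (r i.succ) =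
      blockOffset l (r' i.castSucc) (r' i.succ) := by
    intro i
    have := congrArg Fin.val (congrFun (eq_of_heq hcodes) i)
    simp only [Fin.val_ofNat] at this
    rwa [Nat.mod_eq_of_lt (blockOffset_lt (Nat.pos_of_neZero l) (hr i)),
      Nat.mod_eq_of_lt (blockOffset_lt (Nat.pos_of_neZero l) (hr' i))] at this
  obtain rfl := hr.eq_of_blockOffset_eq hr' (h0.trans h0'.symm) hoffsets
  rfl

theorem card_starPaths_le {l M : ℕ} (hl : 1 ≤ l) {g : Matrix (Fin M) (Fin M) ℂ}
    (htri : ∀ a b : Fin M, 2 ≤ |siteOf l a - siteOf l b| → g a b = 0) (α α' : Fin M) :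
    #{γ : PathIdx M | IsStarPath g α α' γ} ≤ (3 * l) ^ M := by
  have : NeZero l := ⟨by omega⟩
  calc #{γ : PathIdx M | IsStarPath g α α' γ}
      ≤ #(univ : Finset (Σ k : Fin M, Fin k.1 → Fin (3 * l))) := by
        refine card_le_card_of_injOn (blockCode l) (fun _ _ => mem_univ _) ?_
        refine (blockCode_injOn l α').mono fun γ hγ => ?_
        have hγ := (mem_filter.mp hγ).2
        exact ⟨hγ.1, hγ.isBlockPath htri⟩
    _ ≤ (3 * l) ^ M := Fintype.card_sigma_fin_pow_le (by omega)

theorem statement17_general (N l : ℕ) (hl : 1 ≤ l)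
    (g : Matrix (Fin (N * l)) (Fin (N * l)) ℂ)
    (htri : ∀ a b : Fin (N * l), 2 ≤ |siteOf l a - siteOf l b| → g a b = 0)
    (α α' : Fin (N * l)) :
    (∀ γ ∈ Finset.univ.filter (fun γ : PathIdx (N * l) => IsStarPath g α α' γ),
        |siteOf l α - siteOf l α'| ≤ (bval l γ : ℤ) ∧ (bval l γ : ℤ) ≤ (N * l : ℤ)) ∧
      (Finset.univ.filter (fun γ : PathIdx (N * l) => IsStarPath g α α' γ)).card ≤
        (3 * l) ^ (N * l) := by
  refine ⟨fun γ hγ => ?_, card_starPaths_le hl htri α α'⟩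
  have hγ := (mem_filter.mp hγ).2
  constructor
  · have h := (hγ.isBlockPath htri).abs_siteOf_sub_le_bval
    rwa [hγ.2.1, show (0 : Fin (γ.1.1 + 1)) = ⟨0, Nat.succ_pos _⟩ from rfl, hγ.1] at h
  · exact_mod_cast (bval_lt γ).le

/-- for a block tridiagonal `(Nl)×(Nl)` matrix `g` (blocks of
size `l`, site coordinate `p(α) = α / l`) and any `α, α'`:
(a) every `γ ∈ P*_{α'→α}` satisfies `|p(α) - p(α')| ≤ b(γ) ≤ Nl`; and
(b) `#P*_{α'→α} ≤ (3l)^{Nl}`. -/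
theorem statement17 (N l : ℕ) (hN : 1 ≤ N) (hl : 1 ≤ l)
    (g : Matrix (Fin (N * l)) (Fin (N * l)) ℂ)
    (htri : ∀ a b : Fin (N * l), 2 ≤ |siteOf l a - siteOf l b| → g a b = 0)
    (α α' : Fin (N * l)) :
    (∀ γ ∈ Finset.univ.filter (fun γ : PathIdx (N * l) => IsStarPath g α α' γ),
        |siteOf l α - siteOf l α'| ≤ (bval l γ : ℤ) ∧ (bval l γ : ℤ) ≤ (N * l : ℤ)) ∧
      (Finset.univ.filter (fun γ : PathIdx (N * l) => IsStarPath g α α' γ)).card ≤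
        (3 * l) ^ (N * l) :=
  statement17_general N l hl g htri α α'
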